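/- arXiv:2107.10486 — 2 statements merged into one kernel-verified Lean document; each statement's English description precedes it below -/
import Mathlib

section
/- Let X be a C*-correspondence over A, Y a C*-correspondence over B, M an A–B imprimitivity bimodule, and U_M : X ⊗_A M → M ⊗_B Y an A–B correspondence isomorphism. Let N = M̃ be the dual B–A imprimitivity bimodule, and let m_A : M ⊗_B N → A, x ⊗ ỹ ↦ ⟨x,y⟩_A and m_B : N ⊗_A M → B, x̃ ⊗ y ↦ ⟨x,y⟩_B be the canonical correspondence isomorphisms. Then there exists a B–A correspondence isomorphism U_N : Y ⊗_B N → N ⊗_A X such that (i_{l,X} ⊗ 1_M)(m_A ⊗ 1_{X ⊗_A M})(1_{M ⊗_B N} ⊗ U_M^{-1}) = U_M^{-1}(1_M ⊗ i_{l,Y})(1_M ⊗ m_B ⊗ 1_Y) as maps on M ⊗_B N ⊗_A M ⊗_B Y, where i_{l,X} : A ⊗_A X → X and i_{l,Y} : B ⊗_B Y → Y are the canonical isomorphisms. -/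
/-!  Common framework: C*-correspondences, tensor products, representations,
Cuntz–Pimsner algebras, and the category `ECCor`, axiomatised as structures. -/

noncomputable section

universe u

/-- The closed linear span of a subset of a topological `ℂ`-module. -/
def clspan {V : Type*} [AddCommMonoid V] [Module ℂ V] [TopologicalSpace V] (s : Set V) : Set V :=
  closure ((Submodule.span ℂ s : Submodule ℂ V) : Set V)

/-- A (nondegenerate) C*-correspondence from `A` to `B`: a right Hilbert `B`-module `X`
equipped with a left action of `A` by adjointable operators, such that `A · X` is dense. -/
structure Corr (A : Type u) (B : Type u)
    [NonUnitalCStarAlgebra A] [NonUnitalCStarAlgebra B] : Type (u + 1) where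
  /-- the underlying module -/
  X : Type u
  [nacg : NormedAddCommGroup X]
  [nsp : NormedSpace ℂ X]
  [cs : CompleteSpace X]
  /-- the `B`-valued inner product `⟨·,·⟩_B` -/
  ip : X → X → B
  /-- the right action of `B` -/
  sm : X → B → X
  /-- the left action of `A` -/
  la : A → X → X
  sm_add : ∀ (x y : X) (b : B), sm (x + y) b = sm x b + sm y b
  sm_add' : ∀ (x : X) (b c : B), sm x (b + c) = sm x b + sm x c
  sm_mul : ∀ (x : X) (b c : B), sm (sm x b) c = sm x (b * c)
  sm_smul : ∀ (z : ℂ) (x : X) (b : B), sm (z • x) b = z • sm x b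
  sm_smul' : ∀ (z : ℂ) (x : X) (b : B), sm x (z • b) = z • sm x b
  sm_bound : ∀ (x : X) (b : B), ‖sm x b‖ ≤ ‖x‖ * ‖b‖
  ip_add : ∀ (x y z : X), ip x (y + z) = ip x y + ip x z
  ip_smul : ∀ (z : ℂ) (x y : X), ip x (z • y) = z • ip x y
  ip_star : ∀ (x y : X), star (ip x y) = ip y x
  ip_sm : ∀ (x y : X) (b : B), ip x (sm y b) = ip x y * b
  ip_pos : ∀ x : X, ∃ b : B, ip x x = star b * b
  ip_norm : ∀ x : X, ‖x‖ ^ 2 = ‖ip x x‖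
  ip_bound : ∀ x y : X, ‖ip x y‖ ≤ ‖x‖ * ‖y‖
  la_add : ∀ (a : A) (x y : X), la a (x + y) = la a x + la a y
  la_smul : ∀ (a : A) (z : ℂ) (x : X), la a (z • x) = z • la a x
  la_add' : ∀ (a b : A) (x : X), la (a + b) x = la a x + la b x
  la_mul : ∀ (a b : A) (x : X), la (a * b) x = la a (la b x)
  la_smul' : ∀ (z : ℂ) (a : A) (x : X), la (z • a) x = z • la a x
  la_adj : ∀ (a : A) (x y : X), ip (la a x) y = ip x (la (star a) y)
  la_bound : ∀ (a : A) (x : X), ‖la a x‖ ≤ ‖a‖ * ‖x‖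
  la_sm : ∀ (a : A) (x : X) (b : B), la a (sm x b) = sm (la a x) b
  /-- nondegeneracy: `A · X` is dense in `X` -/
  nondeg : clspan {y : X | ∃ (a : A) (x : X), y = la a x} = Set.univ

attribute [instance] Corr.nacg Corr.nsp Corr.cs

namespace Corr

variable {A B : Type u} [NonUnitalCStarAlgebra A] [NonUnitalCStarAlgebra B]

/-- The left action, as a continuous linear operator. -/
def lmul (E : Corr A B) (a : A) : E.X →L[ℂ] E.X :=
  LinearMap.mkContinuous
    { toFun := E.la a
      map_add' := E.la_add a
      map_smul' := fun z x => E.la_smul a z x }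
    ‖a‖ (E.la_bound a)

/-- The rank-one operator `θ_{x,y} : z ↦ x · ⟨y, z⟩_B`. -/
def rankOne (E : Corr A B) (x y : E.X) : E.X →L[ℂ] E.X :=
  LinearMap.mkContinuous
    { toFun := fun z => E.sm x (E.ip y z)
      map_add' := fun u v => by
        show E.sm x (E.ip y (u + v)) = E.sm x (E.ip y u) + E.sm x (E.ip y v)
        rw [E.ip_add, E.sm_add']
      map_smul' := fun c u => by
        show E.sm x (E.ip y (c • u)) = c • E.sm x (E.ip y u)
        rw [E.ip_smul, E.sm_smul'] }
    (‖x‖ * ‖y‖)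
    (fun z => by
      calc ‖E.sm x (E.ip y z)‖ ≤ ‖x‖ * ‖E.ip y z‖ := E.sm_bound _ _
        _ ≤ ‖x‖ * (‖y‖ * ‖z‖) :=
            mul_le_mul_of_nonneg_left (E.ip_bound y z) (norm_nonneg x)
        _ = ‖x‖ * ‖y‖ * ‖z‖ := (mul_assoc _ _ _).symm)

/-- The compact operators `K(X)`: the closed linear span of the rank-one operators. -/
def compacts (E : Corr A B) : Set (E.X →L[ℂ] E.X) :=
  clspan (Set.range fun p : E.X × E.X => E.rankOne p.1 p.2)

/-- A correspondence is injective if its left action is injective. -/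
def Injective (E : Corr A B) : Prop := Function.Injective E.lmul

/-- A correspondence is regular if its left action is injective with values in the compacts. -/
def Regular (E : Corr A B) : Prop :=
  Function.Injective E.lmul ∧ ∀ a : A, E.lmul a ∈ E.compacts

/-- Katsura's ideal `J_X = φ_X⁻¹(K(X)) ∩ (ker φ_X)^⊥` of a correspondence over `A`. -/
def katsuraIdeal {A : Type u} [NonUnitalCStarAlgebra A] (E : Corr A A) : Set A :=
  {a : A | E.lmul a ∈ E.compacts ∧ ∀ b : A, E.lmul b = 0 → a * b = 0}

/-- The closed submodule `M · J` of `M` determined by a subset `J ⊆ B`. -/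
def smSet (M : Corr A B) (J : Set B) : Set M.X :=
  clspan {ξ : M.X | ∃ (m : M.X) (b : B), b ∈ J ∧ ξ = M.sm m b}

/-- A pair of operators on a correspondence which are adjoint to each other. -/
def IsAdjointPair (W : Corr A B) (T S : W.X →L[ℂ] W.X) : Prop :=
  ∀ ξ η : W.X, W.ip (T ξ) η = W.ip ξ (S η)

end Corr

/-- The condition `J_X · M ⊆ M · J_Y` on an `A–B` correspondence `M`,
relative to correspondences `X` over `A` and `Y` over `B`. -/
def KatsuraCompat {A B : Type u} [NonUnitalCStarAlgebra A] [NonUnitalCStarAlgebra B]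
    (E : Corr A A) (M : Corr A B) (F : Corr B B) : Prop :=
  ∀ a ∈ E.katsuraIdeal, ∀ m : M.X, M.la a m ∈ M.smSet F.katsuraIdeal

/-- An isomorphism of `A–B` correspondences. -/
structure CorrIso {A B : Type u} [NonUnitalCStarAlgebra A] [NonUnitalCStarAlgebra B]
    (E F : Corr A B) where
  toFun : E.X → F.X
  invFun : F.X → E.X
  left_inv : Function.LeftInverse invFun toFun
  right_inv : Function.RightInverse invFun toFun
  map_add : ∀ x y : E.X, toFun (x + y) = toFun x + toFun y
  map_smul : ∀ (c : ℂ) (x : E.X), toFun (c • x) = c • toFun x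
  map_la : ∀ (a : A) (x : E.X), toFun (E.la a x) = F.la a (toFun x)
  map_ip : ∀ x y : E.X, F.ip (toFun x) (toFun y) = E.ip x y

/-- Witness that the correspondence `T` *is* the balanced tensor product `E ⊗_B F`,
via the bilinear map `mk2 : (x, y) ↦ x ⊗ y`. -/
structure TensorData {A B C : Type u} [NonUnitalCStarAlgebra A] [NonUnitalCStarAlgebra B]
    [NonUnitalCStarAlgebra C] (E : Corr A B) (F : Corr B C) (T : Corr A C) where
  mk2 : E.X → F.X → T.X
  add_l : ∀ (x x' : E.X) (y : F.X), mk2 (x + x') y = mk2 x y + mk2 x' y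
  add_r : ∀ (x : E.X) (y y' : F.X), mk2 x (y + y') = mk2 x y + mk2 x y'
  smul_l : ∀ (c : ℂ) (x : E.X) (y : F.X), mk2 (c • x) y = c • mk2 x y
  smul_r : ∀ (c : ℂ) (x : E.X) (y : F.X), mk2 x (c • y) = c • mk2 x y
  balanced : ∀ (x : E.X) (b : B) (y : F.X), mk2 (E.sm x b) y = mk2 x (F.la b y)
  ip_mk : ∀ (x x' : E.X) (y y' : F.X),
    T.ip (mk2 x y) (mk2 x' y') = F.ip y (F.la (E.ip x x') y')
  la_mk : ∀ (a : A) (x : E.X) (y : F.X), T.la a (mk2 x y) = mk2 (E.la a x) y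
  sm_mk : ∀ (x : E.X) (y : F.X) (c : C), T.sm (mk2 x y) c = mk2 x (F.sm y c)
  dense : clspan (Set.range fun p : E.X × F.X => mk2 p.1 p.2) = Set.univ

/-- Witness that `C` is the `A–D` correspondence obtained from the C*-algebra `D`
by letting `A` act on the left through the map `ψ : A → D` (e.g. the identity
correspondence when `D = A` and `ψ = id`). -/
structure PullCorr {A D : Type u} [NonUnitalCStarAlgebra A] [NonUnitalCStarAlgebra D]
    (ψ : A → D) (C : Corr A D) where
  u : D → C.X
  bij : Function.Bijective u
  add : ∀ d d' : D, u (d + d') = u d + u d'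
  smul : ∀ (c : ℂ) (d : D), u (c • d) = c • u d
  ip : ∀ d d' : D, C.ip (u d) (u d') = star d * d'
  la : ∀ (a : A) (d : D), C.la a (u d) = u (ψ a * d)
  sm : ∀ d d' : D, C.sm (u d) d' = u (d * d')

/-- Witness that `W'` is the `C–D` correspondence obtained from the `B–D` correspondence `W`
by transferring the left action along a homomorphism `σ : C → L(W)`. -/
structure ReCorr {B C D : Type u} [NonUnitalCStarAlgebra B] [NonUnitalCStarAlgebra C]
    [NonUnitalCStarAlgebra D] (W : Corr B D) (σ : C → (W.X →L[ℂ] W.X)) (W' : Corr C D) where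
  w : W.X → W'.X
  bij : Function.Bijective w
  add : ∀ ξ η : W.X, w (ξ + η) = w ξ + w η
  smul : ∀ (c : ℂ) (ξ : W.X), w (c • ξ) = c • w ξ
  ip_eq : ∀ ξ η : W.X, W'.ip (w ξ) (w η) = W.ip ξ η
  sm_eq : ∀ (ξ : W.X) (d : D), w (W.sm ξ d) = W'.sm (w ξ) d
  la_eq : ∀ (c : C) (ξ : W.X), W'.la c (w ξ) = w (σ c ξ)

/-- The structure of an `A–B` imprimitivity bimodule on an `A–B` correspondence `M`:
a compatible left `A`-valued inner product, full on both sides. -/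
structure ImpData {A B : Type u} [NonUnitalCStarAlgebra A] [NonUnitalCStarAlgebra B]
    (M : Corr A B) where
  lip : M.X → M.X → A
  lip_add : ∀ x y z : M.X, lip (x + y) z = lip x z + lip y z
  lip_smul : ∀ (c : ℂ) (x y : M.X), lip (c • x) y = c • lip x y
  lip_star : ∀ x y : M.X, star (lip x y) = lip y x
  lip_la : ∀ (a : A) (x y : M.X), lip (M.la a x) y = a * lip x y
  lip_pos : ∀ x : M.X, ∃ a : A, lip x x = star a * a
  compat : ∀ x y z : M.X, M.la (lip x y) z = M.sm x (M.ip y z)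
  full_left : clspan {a : A | ∃ x y : M.X, a = lip x y} = Set.univ
  full_right : clspan {b : B | ∃ x y : M.X, b = M.ip x y} = Set.univ

/-- Witness that the `B–A` correspondence `N` is the dual (conjugate) imprimitivity bimodule
of the `A–B` imprimitivity bimodule `M`. -/
structure DualData {A B : Type u} [NonUnitalCStarAlgebra A] [NonUnitalCStarAlgebra B]
    (M : Corr A B) (imp : ImpData M) (N : Corr B A) where
  d : M.X → N.X
  bij : Function.Bijective d
  add : ∀ x y : M.X, d (x + y) = d x + d y
  conj_smul : ∀ (c : ℂ) (x : M.X), d (c • x) = (starRingEnd ℂ c) • d x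
  la_eq : ∀ (b : B) (x : M.X), N.la b (d x) = d (M.sm x (star b))
  sm_eq : ∀ (x : M.X) (a : A), N.sm (d x) a = d (M.la (star a) x)
  ip_eq : ∀ x y : M.X, N.ip (d x) (d y) = imp.lip x y

/-- Witness that `X` (a correspondence over `A`) is a nondegenerate subcorrespondence of
`Y` (a correspondence over `B`), via `(φ̇, ϕ)`. -/
structure SubCorr {A B : Type u} [NonUnitalCStarAlgebra A] [NonUnitalCStarAlgebra B]
    (E : Corr A A) (F : Corr B B) where
  φd : E.X → F.X
  φd_inj : Function.Injective φd
  φd_add : ∀ x y : E.X, φd (x + y) = φd x + φd y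
  φd_smul : ∀ (c : ℂ) (x : E.X), φd (c • x) = c • φd x
  ϕ : A → B
  ϕ_inj : Function.Injective ϕ
  ϕ_add : ∀ a b : A, ϕ (a + b) = ϕ a + ϕ b
  ϕ_mul : ∀ a b : A, ϕ (a * b) = ϕ a * ϕ b
  ϕ_star : ∀ a : A, ϕ (star a) = star (ϕ a)
  ϕ_smul : ∀ (c : ℂ) (a : A), ϕ (c • a) = c • ϕ a
  ϕ_nondeg : clspan {b : B | ∃ (a : A) (c : B), b = ϕ a * c} = Set.univ
  la_eq : ∀ (a : A) (x : E.X), φd (E.la a x) = F.la (ϕ a) (φd x)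
  ip_eq : ∀ x y : E.X, F.ip (φd x) (φd y) = ϕ (E.ip x y)
  dense : clspan {y : F.X | ∃ (x : E.X) (b : B), y = F.sm (φd x) b} = Set.univ

/-- A representation `(π, t)` of a correspondence `X` over `A` on a C*-algebra `D`. -/
structure CorrRep {A : Type u} [NonUnitalCStarAlgebra A] (E : Corr A A)
    (D : Type u) [NonUnitalCStarAlgebra D] where
  π : A → D
  t : E.X → D
  π_add : ∀ a b : A, π (a + b) = π a + π b
  π_mul : ∀ a b : A, π (a * b) = π a * π b
  π_star : ∀ a : A, π (star a) = star (π a)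
  π_smul : ∀ (c : ℂ) (a : A), π (c • a) = c • π a
  t_add : ∀ x y : E.X, t (x + y) = t x + t y
  t_smul : ∀ (c : ℂ) (x : E.X), t (c • x) = c • t x
  mul_t : ∀ (a : A) (x : E.X), π a * t x = t (E.la a x)
  t_mul : ∀ x y : E.X, star (t x) * t y = π (E.ip x y)

/-- Covariance of a representation on the Katsura ideal:
`π(a) = Ψ_t(φ_X(a))` for `a ∈ J_X`, expressed by simultaneous approximation of
`φ_X(a)` by finite-rank operators and of `π(a)` by the corresponding finite sums. -/
def CorrRep.Covariant {A : Type u} [NonUnitalCStarAlgebra A] {E : Corr A A}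
    {D : Type u} [NonUnitalCStarAlgebra D] (R : CorrRep E D) : Prop :=
  ∀ a ∈ E.katsuraIdeal, ∀ ε > (0 : ℝ), ∃ (k : ℕ) (x y : Fin k → E.X),
    ‖E.lmul a - ∑ i, E.rankOne (x i) (y i)‖ < ε ∧
    ‖R.π a - ∑ i, R.t (x i) * star (R.t (y i))‖ < ε

/-- The products `t(x₁)⋯t(xₙ)`, i.e. `t^n` applied to elementary tensors. -/
def CorrRep.tProd {A : Type u} [NonUnitalCStarAlgebra A] {E : Corr A A}
    {D : Type u} [NonUnitalCStarAlgebra D] (R : CorrRep E D) :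
    (n : ℕ) → (Fin (n + 1) → E.X) → D
  | 0, x => R.t (x 0)
  | (k + 1), x => R.t (x 0) * R.tProd k (fun i => x i.succ)

/-- A Cuntz–Pimsner algebra for `X`: a C*-algebra `O` with a universal injective covariant
representation of `X`, generated by the image of that representation. -/
structure CuntzPimsner {A : Type u} [NonUnitalCStarAlgebra A] (E : Corr A A) :
    Type (u + 1) where
  O : Type u
  [str : NonUnitalCStarAlgebra O]
  rep : CorrRep E O
  covariant : rep.Covariant
  injective : Function.Injective rep.π
  generates :
    Dense ((NonUnitalStarAlgebra.adjoin ℂ (Set.range rep.π ∪ Set.range rep.t) :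
      NonUnitalStarSubalgebra ℂ O) : Set O)
  universal : ∀ (D : Type u) [NonUnitalCStarAlgebra D] (R : CorrRep E D), R.Covariant →
    ∃ ρ : O → D, Continuous ρ ∧
      (∀ p q : O, ρ (p + q) = ρ p + ρ q) ∧
      (∀ (c : ℂ) (p : O), ρ (c • p) = c • ρ p) ∧
      (∀ p q : O, ρ (p * q) = ρ p * ρ q) ∧
      (∀ p : O, ρ (star p) = star (ρ p)) ∧
      (∀ a : A, ρ (rep.π a) = R.π a) ∧
      (∀ x : E.X, ρ (rep.t x) = R.t x)

attribute [instance] CuntzPimsner.str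

/-- The gauge action of the circle on a Cuntz–Pimsner algebra. -/
structure GaugeAction {A : Type u} [NonUnitalCStarAlgebra A] {E : Corr A A}
    (CP : CuntzPimsner E) where
  g : ℂ → CP.O → CP.O
  g_add : ∀ z : ℂ, ‖z‖ = 1 → ∀ S T : CP.O, g z (S + T) = g z S + g z T
  g_smul : ∀ z : ℂ, ‖z‖ = 1 → ∀ (c : ℂ) (S : CP.O), g z (c • S) = c • g z S
  g_mul : ∀ z : ℂ, ‖z‖ = 1 → ∀ S T : CP.O, g z (S * T) = g z S * g z T
  g_star : ∀ z : ℂ, ‖z‖ = 1 → ∀ S : CP.O, g z (star S) = star (g z S)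
  g_comp : ∀ z w : ℂ, ‖z‖ = 1 → ‖w‖ = 1 → ∀ S : CP.O, g (z * w) S = g z (g w S)
  g_one : ∀ S : CP.O, g 1 S = S
  g_cont : ∀ S : CP.O, Continuous fun z : {z : ℂ // ‖z‖ = 1} => g z.1 S
  g_π : ∀ z : ℂ, ‖z‖ = 1 → ∀ a : A, g z (CP.rep.π a) = CP.rep.π a
  g_t : ∀ z : ℂ, ‖z‖ = 1 → ∀ x : E.X, g z (CP.rep.t x) = z • CP.rep.t x

/-- The data of a morphism `X → Y` in the category `ECCor`: a regular `A–B` correspondence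
`M` with `J_X · M ⊆ M · J_Y`, together with a correspondence isomorphism
`U : X ⊗_A M → M ⊗_B Y`. -/
structure EMor {A B : Type u} [NonUnitalCStarAlgebra A] [NonUnitalCStarAlgebra B]
    (E : Corr A A) (F : Corr B B) : Type (u + 1) where
  M : Corr A B
  regular : M.Regular
  kat : KatsuraCompat E M F
  TXM : Corr A B
  tdXM : TensorData E M TXM
  TMY : Corr A B
  tdMY : TensorData M F TMY
  U : CorrIso TXM TMY

/-- Two morphism data `(M, U_M)` and `(M', U_{M'})` are isomorphic:
there is an isomorphism `ξ : M → M'` with `U_{M'} ∘ (1_X ⊗ ξ) = (ξ ⊗ 1_Y) ∘ U_M`. -/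
def EMorEquiv {A B : Type u} [NonUnitalCStarAlgebra A] [NonUnitalCStarAlgebra B]
    {E : Corr A A} {F : Corr B B} (m m' : EMor E F) : Prop :=
  ∃ ξ : CorrIso m.M m'.M,
  ∃ Ξ : m.TMY.X → m'.TMY.X,
    (∀ ζ η, Ξ (ζ + η) = Ξ ζ + Ξ η) ∧
    (∀ (c : ℂ) ζ, Ξ (c • ζ) = c • Ξ ζ) ∧
    Continuous Ξ ∧
    (∀ (mm : m.M.X) (y : F.X), Ξ (m.tdMY.mk2 mm y) = m'.tdMY.mk2 (ξ.toFun mm) y) ∧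
    (∀ (x : E.X) (mm : m.M.X),
      m'.U.toFun (m'.tdXM.mk2 x (ξ.toFun mm)) = Ξ (m.U.toFun (m.tdXM.mk2 x mm)))

/-- `p` is a composite of `m : X → Y` and `n : Y → Z` in `ECCor`:
`p.M = M ⊗_B N` and `U_P = (1_M ⊗ U_N)(U_M ⊗ 1_N)` modulo the canonical identifications. -/
def EIsComposite {A B C : Type u} [NonUnitalCStarAlgebra A] [NonUnitalCStarAlgebra B]
    [NonUnitalCStarAlgebra C] {E : Corr A A} {F : Corr B B} {G : Corr C C}
    (m : EMor E F) (n : EMor F G) (p : EMor E G) : Prop :=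
  ∃ td : TensorData m.M n.M p.M,
  ∃ Ξ : m.M.X → n.TMY.X → p.TMY.X,       -- m ⊗ (n ⊗ z) ↦ (m ⊗ n) ⊗ z
  ∃ Θ : m.TMY.X → n.M.X → p.TMY.X,       -- (m ⊗ y) ⊗ n ↦ m ⊗ U_N(y ⊗ n)
    (∀ mm : m.M.X, (∀ ζ η, Ξ mm (ζ + η) = Ξ mm ζ + Ξ mm η) ∧
      (∀ (c : ℂ) ζ, Ξ mm (c • ζ) = c • Ξ mm ζ) ∧ Continuous (Ξ mm)) ∧
    (∀ (mm : m.M.X) (nn : n.M.X) (z : G.X),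
      Ξ mm (n.tdMY.mk2 nn z) = p.tdMY.mk2 (td.mk2 mm nn) z) ∧
    (∀ nn : n.M.X, (∀ ζ η, Θ (ζ + η) nn = Θ ζ nn + Θ η nn) ∧
      (∀ (c : ℂ) ζ, Θ (c • ζ) nn = c • Θ ζ nn) ∧ Continuous (fun ζ => Θ ζ nn)) ∧
    (∀ (mm : m.M.X) (y : F.X) (nn : n.M.X),
      Θ (m.tdMY.mk2 mm y) nn = Ξ mm (n.U.toFun (n.tdXM.mk2 y nn))) ∧
    (∀ (x : E.X) (mm : m.M.X) (nn : n.M.X),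
      p.U.toFun (p.tdXM.mk2 x (td.mk2 mm nn)) = Θ (m.U.toFun (m.tdXM.mk2 x mm)) nn)

/-- `e` is an identity morphism on `X` in `ECCor`: `e.M` is the identity correspondence `A`
and `U_A = i_l⁻¹ ∘ i_r : X ⊗_A A → A ⊗_A X`, i.e. `i_l (U_A (x ⊗ a)) = x · a`. -/
def EIsIdentity {A : Type u} [NonUnitalCStarAlgebra A] {E : Corr A A}
    (e : EMor E E) : Prop :=
  ∃ idd : PullCorr (fun a : A => a) e.M,
  ∃ il : e.TMY.X → E.X,
    (∀ ζ η, il (ζ + η) = il ζ + il η) ∧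
    (∀ (c : ℂ) ζ, il (c • ζ) = c • il ζ) ∧
    Continuous il ∧
    Function.Injective il ∧
    (∀ (a : A) (x : E.X), il (e.tdMY.mk2 (idd.u a) x) = E.la a x) ∧
    (∀ (x : E.X) (a : A), il (e.U.toFun (e.tdXM.mk2 x (idd.u a))) = E.sm x a)

/-- A morphism in `ECCor` is an isomorphism: it has a two-sided inverse up to
isomorphism of morphism data. -/
def EIsEIso {A B : Type u} [NonUnitalCStarAlgebra A] [NonUnitalCStarAlgebra B]
    {E : Corr A A} {F : Corr B B} (m : EMor E F) : Prop :=
  ∃ (n : EMor F E) (p : EMor E E) (q : EMor F F) (e : EMor E E) (f : EMor F F),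
    EIsComposite m n p ∧ EIsIdentity e ∧ EMorEquiv p e ∧
    EIsComposite n m q ∧ EIsIdentity f ∧ EMorEquiv q f

/-- The standing data for the C-covariant representation of `X` on `K(M ⊗_B O_Y)`
associated with a morphism `[M, U_M] : X → Y` in `ECCor`:  `O_Y` regarded as a
`B–O_Y` correspondence, the tensor product `W = M ⊗_B O_Y`, the canonical map
`Λ : (M ⊗_B Y) × O_Y → W`, `(m ⊗ y, S) ↦ m ⊗ t_Y(y)S`, and the operators
`Φ(x) = (1_M ⊗ V_Y)(T(x) ⊗ 1_{O_Y})`. -/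
structure CCovSetup {A B : Type u} [NonUnitalCStarAlgebra A] [NonUnitalCStarAlgebra B]
    {E : Corr A A} {F : Corr B B} (m : EMor E F) (CPY : CuntzPimsner F) :
    Type (u + 1) where
  OYc : Corr B CPY.O
  pcY : PullCorr CPY.rep.π OYc
  W : Corr A CPY.O
  tdW : TensorData m.M OYc W
  Λ : m.TMY.X → CPY.O → W.X
  Λ_add : ∀ (S : CPY.O) (ζ η : m.TMY.X), Λ (ζ + η) S = Λ ζ S + Λ η S
  Λ_smul : ∀ (S : CPY.O) (c : ℂ) (ζ : m.TMY.X), Λ (c • ζ) S = c • Λ ζ S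
  Λ_cont : ∀ S : CPY.O, Continuous fun ζ => Λ ζ S
  Λ_mk : ∀ (mm : m.M.X) (y : F.X) (S : CPY.O),
    Λ (m.tdMY.mk2 mm y) S = tdW.mk2 mm (pcY.u (CPY.rep.t y * S))
  Φ : E.X → (W.X →L[ℂ] W.X)
  Φ_mk : ∀ (x : E.X) (mm : m.M.X) (S : CPY.O),
    Φ x (tdW.mk2 mm (pcY.u S)) = Λ (m.U.toFun (m.tdXM.mk2 x mm)) S

/-- The homomorphism `σ : O_X → K(M ⊗_B O_Y) ⊆ L(M ⊗_B O_Y)` induced by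
the C-covariant representation. -/
structure SigmaData {A B : Type u} [NonUnitalCStarAlgebra A] [NonUnitalCStarAlgebra B]
    {E : Corr A A} {F : Corr B B} {m : EMor E F} {CPY : CuntzPimsner F}
    (st : CCovSetup m CPY) (CPX : CuntzPimsner E) where
  σ : CPX.O → (st.W.X →L[ℂ] st.W.X)
  σ_add : ∀ S T : CPX.O, σ (S + T) = σ S + σ T
  σ_smul : ∀ (c : ℂ) (S : CPX.O), σ (c • S) = c • σ S
  σ_mul : ∀ S T : CPX.O, σ (S * T) = (σ S).comp (σ T)
  σ_star : ∀ S : CPX.O, st.W.IsAdjointPair (σ S) (σ (star S))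
  σ_cont : Continuous σ
  σ_t : ∀ x : E.X, σ (CPX.rep.t x) = st.Φ x
  σ_π : ∀ a : A, σ (CPX.rep.π a) = st.W.lmul a

/-- A bundled C*-correspondence over a C*-algebra. -/
structure BCorr : Type (u + 1) where
  alg : Type u
  [str : NonUnitalCStarAlgebra alg]
  cor : Corr alg alg

attribute [instance] BCorr.str

/-- Elementary strong shift equivalence through *regular* correspondences `R`, `S`:
`X ≅ R ⊗_B S` and `Y ≅ S ⊗_A R`. -/
def ElemSSERegular (E F : BCorr) : Prop :=
  ∃ (R : Corr E.alg F.alg) (S : Corr F.alg E.alg)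
    (T₁ : Corr E.alg E.alg) (_ : TensorData R S T₁)
    (T₂ : Corr F.alg F.alg) (_ : TensorData S R T₂),
    R.Regular ∧ S.Regular ∧ Nonempty (CorrIso T₁ E.cor) ∧ Nonempty (CorrIso T₂ F.cor)

/-- Strong shift equivalence (with all intermediate data regular). -/
def StrongSSERegular (E F : BCorr) : Prop :=
  ∃ (n : ℕ) (Z : Fin (n + 1) → BCorr),
    Z 0 = E ∧ Z (Fin.last n) = F ∧
    (∀ i, (Z i).cor.Regular) ∧
    ∀ i : Fin n, ElemSSERegular (Z i.castSucc) (Z i.succ)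

/-- The tower of tensor powers `X^{⊗ k}` of a correspondence `X` over `A`
(with `X^{⊗ 0} = A`), together with the "append on the right" maps
`X^{⊗ k} × X → X^{⊗ (k+1)}`. -/
structure PowerTower {A : Type u} [NonUnitalCStarAlgebra A] (E : Corr A A) :
    Type (u + 1) where
  P : ℕ → Corr A A
  zero : PullCorr (fun a : A => a) (P 0)
  step : ∀ k : ℕ, TensorData E (P k) (P (k + 1))
  app : ∀ k : ℕ, (P k).X → E.X → (P (k + 1)).X
  app_add : ∀ (k : ℕ) (y : E.X) (w w' : (P k).X), app k (w + w') y = app k w y + app k w' y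
  app_smul : ∀ (k : ℕ) (y : E.X) (c : ℂ) (w : (P k).X), app k (c • w) y = c • app k w y
  app_cont : ∀ (k : ℕ) (y : E.X), Continuous fun w => app k w y
  app_base : ∀ (a : A) (y : E.X) (b : A),
    (P 1).sm (app 0 (zero.u a) y) b = (step 0).mk2 (E.la a y) (zero.u b)
  app_step : ∀ (k : ℕ) (x : E.X) (w : (P k).X) (y : E.X),
    app (k + 1) ((step k).mk2 x w) y = (step (k + 1)).mk2 x (app k w y)

end

/-!
On the elementary tensors `⟨m, μ⟩_B · y ⊗ ñ`, which are total in `Y ⊗_B N` because `⟨·,·⟩_B` is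
full, put `U_N (⟨m, μ⟩_B · y ⊗ ñ) = m̃ ⊗ P_n (U_M⁻¹ (μ ⊗ y))`, where `P_n : X ⊗_A M → X` is
`x ⊗ μ ↦ x · ⟨μ, n⟩_A`. The compatibility `⟨x, y⟩_A · z = x · ⟨y, z⟩_B` turns both inner products
into `⟨ñ₁, ⟨y₁, ⟨μ₁, m₁⟩_B ⟨m₂, μ₂⟩_B · y₂⟩ · ñ₂⟩`, so `U_N` extends to a `B`-linear isometry.
Its range contains all `m̃ ⊗ x · ⟨μ, n⟩_A`, which are total since `X · A` is dense in `X`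
(approximate units) and `⟨·,·⟩_A` is full; an isometry with dense range is onto.

The displayed identity is the `A`-linearity of `U_M⁻¹`, since `m_A (ξ ⊗ ñ) · μ = ξ · m_B (ñ ⊗ μ)`.
-/

noncomputable section

universe u

open Filter Topology

section ClosedSpan

variable {V W : Type*} [NormedAddCommGroup V] [NormedSpace ℂ V]
  [NormedAddCommGroup W] [NormedSpace ℂ W]

lemma clspan_eq_univ_iff_dense (s : Set V) :
    clspan s = Set.univ ↔ Dense (Submodule.span ℂ s : Set V) :=
  dense_iff_closure_eq.symm

lemma subset_clspan (s : Set V) : s ⊆ clspan s :=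
  fun _ hx => subset_closure (Submodule.subset_span hx)

lemma clspan_univ : clspan (Set.univ : Set V) = Set.univ :=
  Set.eq_univ_of_univ_subset (subset_clspan _)

lemma map_mem_clspan {f : V →L[ℂ] W} {s : Set V} {t : Set W}
    (h : ∀ x ∈ s, f x ∈ clspan t) {x : V} (hx : x ∈ clspan s) : f x ∈ clspan t := by
  set K := (Submodule.span ℂ t).topologicalClosure
  have hK : clspan t = K := (Submodule.topologicalClosure_coe _).symm
  rw [hK] at h ⊢
  have hspan : Submodule.span ℂ s ≤ K.comap (f : V →ₗ[ℂ] W) := Submodule.span_le.mpr h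
  have hclosed : IsClosed (K.comap (f : V →ₗ[ℂ] W) : Set V) :=
    (Submodule.isClosed_topologicalClosure _).preimage f.continuous
  exact closure_minimal hspan hclosed hx

lemma clspan_eq_univ_of_subset {s t : Set V} (hs : clspan s = Set.univ) (h : s ⊆ clspan t) :
    clspan t = Set.univ :=
  Set.eq_univ_of_univ_subset fun x _ =>
    map_mem_clspan (f := ContinuousLinearMap.id ℂ V) h (hs ▸ Set.mem_univ x)

lemma clspan_eq_univ_of_bilinear {V₁ V₂ : Type*} [NormedAddCommGroup V₁] [NormedSpace ℂ V₁]
    [NormedAddCommGroup V₂] [NormedSpace ℂ V₂] (f : V₁ →L[ℂ] V₂ →L[ℂ] W)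
    {s : Set V₁} {t : Set V₂} {u : Set W} (hs : clspan s = Set.univ) (ht : clspan t = Set.univ)
    (hf : clspan (Set.range fun p : V₁ × V₂ => f p.1 p.2) = Set.univ)
    (hu : ∀ x ∈ s, ∀ y ∈ t, f x y ∈ u) : clspan u = Set.univ := by
  refine clspan_eq_univ_of_subset hf ?_
  rintro _ ⟨⟨x, y⟩, rfl⟩
  have hx : ∀ y ∈ t, f x y ∈ clspan u := fun y hy =>
    map_mem_clspan (f := f.flip y) (fun x' hx' => subset_clspan u (hu x' hx' y hy))
      (hs ▸ Set.mem_univ x)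
  exact map_mem_clspan (f := f x) hx (ht ▸ Set.mem_univ y)

lemma ContinuousLinearMap.denseRange_of_clspan (F : V →L[ℂ] W) {s : Set W}
    (hs : clspan s = Set.univ) (h : s ⊆ Set.range F) : DenseRange F := by
  have hspan : (Submodule.span ℂ s : Set W) ⊆ Set.range F := by
    have := LinearMap.coe_range (F : V →ₗ[ℂ] W)
    rw [ContinuousLinearMap.coe_coe] at this
    rw [← this]
    exact Submodule.span_le.mpr (this ▸ h)
  exact ((clspan_eq_univ_iff_dense s).mp hs).mono hspan

end ClosedSpan

namespace Corr

section Basic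

variable {C D : Type u} [NonUnitalCStarAlgebra C] [NonUnitalCStarAlgebra D] (W : Corr C D)

lemma ip_add_left (x y z : W.X) : W.ip (x + y) z = W.ip x z + W.ip y z := by
  rw [← W.ip_star, W.ip_add, star_add, W.ip_star, W.ip_star]

lemma ip_smul_left (c : ℂ) (x y : W.X) : W.ip (c • x) y = starRingEnd ℂ c • W.ip x y := by
  rw [← W.ip_star, W.ip_smul, star_smul, W.ip_star]
  rfl

lemma ip_sm_left (x y : W.X) (b : D) : W.ip (W.sm x b) y = star b * W.ip x y := by
  rw [← W.ip_star, W.ip_sm, star_mul, W.ip_star]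

lemma ip_la_la (a a' : C) (x y : W.X) :
    W.ip (W.la a x) (W.la a' y) = W.ip x (W.la (star a * a') y) := by
  rw [W.la_adj, ← W.la_mul]

def ipCLM (x : W.X) : W.X →L[ℂ] D :=
  LinearMap.mkContinuous ⟨⟨W.ip x, W.ip_add x⟩, fun c y => W.ip_smul c x y⟩ ‖x‖ (W.ip_bound x)

def ipSL (y : W.X) : W.X →SL[starRingEnd ℂ] D :=
  LinearMap.mkContinuous ⟨⟨(W.ip · y), fun x x' => W.ip_add_left x x' y⟩,
    fun c x => W.ip_smul_left c x y⟩ ‖y‖ fun x => (W.ip_bound x y).trans_eq (mul_comm _ _)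

@[simp] lemma ipCLM_apply (x y : W.X) : W.ipCLM x y = W.ip x y := rfl

@[simp] lemma ipSL_apply (x y : W.X) : W.ipSL y x = W.ip x y := rfl

lemma ip_zero_right (x : W.X) : W.ip x 0 = 0 := map_zero (W.ipCLM x)

lemma ip_zero_left (y : W.X) : W.ip 0 y = 0 := map_zero (W.ipSL y)

lemma ip_sub_right (x y z : W.X) : W.ip x (y - z) = W.ip x y - W.ip x z := map_sub (W.ipCLM x) y z

lemma ip_sub_left (x y z : W.X) : W.ip (x - y) z = W.ip x z - W.ip y z := map_sub (W.ipSL z) x y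

def laL : C →L[ℂ] W.X →L[ℂ] W.X :=
  LinearMap.mkContinuous₂
    (LinearMap.mk₂ ℂ W.la W.la_add' W.la_smul' W.la_add fun c a x => W.la_smul a c x) 1
    fun a x => by simpa using W.la_bound a x

def smL : W.X →L[ℂ] D →L[ℂ] W.X :=
  LinearMap.mkContinuous₂ (LinearMap.mk₂ ℂ W.sm W.sm_add W.sm_smul W.sm_add' W.sm_smul') 1
    fun x b => by simpa using W.sm_bound x b

@[simp] lemma laL_apply (a : C) (x : W.X) : W.laL a x = W.la a x := rfl

@[simp] lemma smL_apply (x : W.X) (b : D) : W.smL x b = W.sm x b := rfl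

lemma clspan_range_la : clspan (Set.range fun p : C × W.X => W.la p.1 p.2) = Set.univ := by
  convert W.nondeg using 2
  ext y
  exact ⟨fun ⟨p, hp⟩ => ⟨p.1, p.2, hp.symm⟩, fun ⟨a, x, h⟩ => ⟨(a, x), h.symm⟩⟩

/-- Along an approximate unit `e` of `D`, `‖x·e - x‖² ≤ 2 ‖⟨x,x⟩ - ⟨x,x⟩e‖ → 0`. -/
lemma mem_closure_range_sm (x : W.X) : x ∈ closure (Set.range (W.sm x)) := by
  let _ := CStarAlgebra.spectralOrder D
  have _ := CStarAlgebra.spectralOrderedRing D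
  have hl := CStarAlgebra.increasingApproximateUnit D
  have : (CStarAlgebra.approximateUnit D).NeBot := hl.neBot
  refine mem_closure_of_tendsto (f := W.sm x) (b := CStarAlgebra.approximateUnit D) ?_
    (Eventually.of_forall fun e => Set.mem_range_self e)
  set b := W.ip x x
  have hb : Tendsto (fun e => √(2 * ‖b - b * e‖)) (CStarAlgebra.approximateUnit D) (𝓝 0) := by
    have := ((hl.tendsto_mul_left b).const_sub b).norm.const_mul 2 |>.sqrt
    simpa using this
  rw [tendsto_iff_norm_sub_tendsto_zero]
  refine squeeze_zero' (Eventually.of_forall fun _ => norm_nonneg _) ?_ hb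
  filter_upwards [hl.eventually_isSelfAdjoint, hl.eventually_norm] with e he he₁
  have hexp : W.ip (W.sm x e - x) (W.sm x e - x) = (b - b * e) - e * (b - b * e) := by
    rw [W.ip_sub_left, W.ip_sub_right, W.ip_sub_right, W.ip_sm_left, W.ip_sm_left, W.ip_sm,
      he.star_eq]
    simp only [mul_sub]
    abel
  have hle : ‖W.sm x e - x‖ ^ 2 ≤ 2 * ‖b - b * e‖ := by
    rw [W.ip_norm, hexp]
    calc ‖(b - b * e) - e * (b - b * e)‖ ≤ ‖b - b * e‖ + ‖e‖ * ‖b - b * e‖ :=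
          (norm_sub_le _ _).trans (add_le_add_right (norm_mul_le _ _) _)
      _ ≤ 2 * ‖b - b * e‖ := by nlinarith [norm_nonneg (b - b * e)]
  simpa using Real.abs_le_sqrt hle

lemma clspan_range_sm : clspan (Set.range fun p : W.X × D => W.sm p.1 p.2) = Set.univ :=
  Set.eq_univ_of_forall fun x => by
    refine closure_mono ?_ (W.mem_closure_range_sm x)
    rintro _ ⟨b, rfl⟩
    exact Submodule.subset_span ⟨(x, b), rfl⟩

lemma norm_eq_norm_of_ip_eq {C' : Type u} [NonUnitalCStarAlgebra C'] (W' : Corr C' D)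
    {x : W.X} {y : W'.X} (h : W.ip x x = W'.ip y y) : ‖x‖ = ‖y‖ :=
  (sq_eq_sq₀ (norm_nonneg _) (norm_nonneg _)).mp (by rw [W.ip_norm, W'.ip_norm, h])

end Basic

section Extension

variable {C D C' D' : Type u} [NonUnitalCStarAlgebra C] [NonUnitalCStarAlgebra D]
  [NonUnitalCStarAlgebra C'] [NonUnitalCStarAlgebra D'] (P : Corr C D) (Q : Corr C' D')

lemma norm_le_of_ip_eq (S : P.X →L[ℂ] P.X) (Φ : D →L[ℂ] D') {x : P.X} {y : Q.X}
    (h : Q.ip y y = Φ (P.ip x (S x))) : ‖y‖ ≤ √(‖Φ‖ * ‖S‖) * ‖x‖ := by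
  have hsq : ‖y‖ ^ 2 ≤ ‖Φ‖ * ‖S‖ * ‖x‖ ^ 2 :=
    calc ‖y‖ ^ 2 = ‖Φ (P.ip x (S x))‖ := by rw [Q.ip_norm, h]
      _ ≤ ‖Φ‖ * (‖x‖ * (‖S‖ * ‖x‖)) := by
        refine Φ.le_opNorm_of_le ((P.ip_bound _ _).trans ?_)
        gcongr
        exact S.le_opNorm x
      _ = ‖Φ‖ * ‖S‖ * ‖x‖ ^ 2 := by ring
  calc ‖y‖ ≤ √(‖Φ‖ * ‖S‖ * ‖x‖ ^ 2) := by simpa using Real.abs_le_sqrt hsq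
    _ = √(‖Φ‖ * ‖S‖) * ‖x‖ := by
      rw [Real.sqrt_mul (by positivity), Real.sqrt_sq (norm_nonneg x)]

lemma ip_map_map_eq_of_clspan (T₁ T₂ : P.X →L[ℂ] Q.X) (S : P.X →L[ℂ] P.X) (Φ : D →L[ℂ] D')
    {s : Set P.X} (hs : clspan s = Set.univ)
    (h : ∀ ζ ∈ s, ∀ η ∈ s, Q.ip (T₁ ζ) (T₂ η) = Φ (P.ip ζ (S η))) (ζ η : P.X) :
    Q.ip (T₁ ζ) (T₂ η) = Φ (P.ip ζ (S η)) := by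
  have hd := (clspan_eq_univ_iff_dense s).mp hs
  have hright : ∀ ζ ∈ s, ∀ η, Q.ip (T₁ ζ) (T₂ η) = Φ (P.ip ζ (S η)) := fun ζ hζ =>
    DFunLike.congr_fun <| ContinuousLinearMap.ext_on hd
      (f := (Q.ipCLM (T₁ ζ)).comp T₂) (g := Φ.comp ((P.ipCLM ζ).comp S))
      fun η hη => by simpa using h ζ hζ η hη
  exact DFunLike.congr_fun (ContinuousLinearMap.ext_on hd
    (f := (Q.ipSL (T₂ η)).comp T₁) (g := Φ.comp (P.ipSL (S η)))
    fun ζ hζ => by simpa using hright ζ hζ η) ζ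

lemma exists_extension_of_ip_eq {I : Type*} (ι : I → P.X) (g : I → Q.X)
    (hι : clspan (Set.range ι) = Set.univ) (S : P.X →L[ℂ] P.X) (Φ : D →L[ℂ] D')
    (hg : ∀ i j, Q.ip (g i) (g j) = Φ (P.ip (ι i) (S (ι j)))) :
    ∃ T : P.X →L[ℂ] Q.X, (∀ i, T (ι i) = g i) ∧ ∀ ζ η, Q.ip (T ζ) (T η) = Φ (P.ip ζ (S η)) := by
  set e := Finsupp.linearCombination ℂ ι
  set f := Finsupp.linearCombination ℂ g
  have hcomb : ∀ c c', Q.ip (f c) (f c') = Φ (P.ip (e c) (S (e c'))) := by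
    intro c c'
    induction c using Finsupp.induction_linear with
    | zero => simp only [map_zero, Q.ip_zero_left, P.ip_zero_left]
    | add c₁ c₂ h₁ h₂ => simp only [map_add, Q.ip_add_left, P.ip_add_left, h₁, h₂]
    | single i z =>
      induction c' using Finsupp.induction_linear with
      | zero => simp only [map_zero, Q.ip_zero_right, P.ip_zero_right]
      | add c₁ c₂ h₁ h₂ => simp only [map_add, Q.ip_add, P.ip_add, h₁, h₂]
      | single j w =>
        simp only [e, f, Finsupp.linearCombination_single, map_smul, Q.ip_smul, Q.ip_smul_left,
          P.ip_smul, P.ip_smul_left, hg]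
  have he : DenseRange e := by
    rw [DenseRange, ← LinearMap.coe_range, Finsupp.range_linearCombination]
    exact (clspan_eq_univ_iff_dense _).mp hι
  have hbound : ∃ K, ∀ c, ‖f c‖ ≤ K * ‖e c‖ :=
    ⟨_, fun c => norm_le_of_ip_eq P Q S Φ (hcomb c c)⟩
  set T := f.extendOfNorm e
  have hTι : ∀ i, T (ι i) = g i := fun i => by
    simpa [e, f] using LinearMap.extendOfNorm_eq he hbound (Finsupp.single i 1)
  refine ⟨T, hTι, ip_map_map_eq_of_clspan P Q T T S Φ hι ?_⟩
  rintro _ ⟨i, rfl⟩ _ ⟨j, rfl⟩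
  rw [hTι, hTι, hg]

end Extension

end Corr

namespace TensorData

variable {A B C : Type u} [NonUnitalCStarAlgebra A] [NonUnitalCStarAlgebra B]
  [NonUnitalCStarAlgebra C] {E : Corr A B} {F : Corr B C} {T : Corr A C} (td : TensorData E F T)

lemma norm_mk2_le (x : E.X) (y : F.X) : ‖td.mk2 x y‖ ≤ ‖x‖ * ‖y‖ := by
  refine (pow_le_pow_iff_left₀ (norm_nonneg _) (by positivity) two_ne_zero).mp ?_
  calc ‖td.mk2 x y‖ ^ 2 = ‖F.ip y (F.la (E.ip x x) y)‖ := by rw [T.ip_norm, td.ip_mk]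
    _ ≤ ‖y‖ * (‖E.ip x x‖ * ‖y‖) := (F.ip_bound _ _).trans (by gcongr; exact F.la_bound _ _)
    _ ≤ ‖y‖ * ((‖x‖ * ‖x‖) * ‖y‖) := by gcongr; exact E.ip_bound x x
    _ = (‖x‖ * ‖y‖) ^ 2 := by ring

def mk2L : E.X →L[ℂ] F.X →L[ℂ] T.X :=
  LinearMap.mkContinuous₂ (LinearMap.mk₂ ℂ td.mk2 td.add_l td.smul_l td.add_r td.smul_r) 1
    fun x y => by simpa using td.norm_mk2_le x y

@[simp] lemma mk2L_apply (x : E.X) (y : F.X) : td.mk2L x y = td.mk2 x y := rfl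

end TensorData

namespace CorrIso

variable {C D : Type u} [NonUnitalCStarAlgebra C] [NonUnitalCStarAlgebra D] {W₁ W₂ : Corr C D}

section Inverse

variable (U : CorrIso W₁ W₂)

lemma invFun_add (x y : W₂.X) : U.invFun (x + y) = U.invFun x + U.invFun y :=
  U.left_inv.injective (by rw [U.map_add, U.right_inv, U.right_inv, U.right_inv])

lemma invFun_smul (c : ℂ) (x : W₂.X) : U.invFun (c • x) = c • U.invFun x :=
  U.left_inv.injective (by rw [U.map_smul, U.right_inv, U.right_inv])

lemma invFun_la (a : C) (x : W₂.X) : U.invFun (W₂.la a x) = W₁.la a (U.invFun x) :=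
  U.left_inv.injective (by rw [U.map_la, U.right_inv, U.right_inv])

lemma invFun_ip (x y : W₂.X) : W₁.ip (U.invFun x) (U.invFun y) = W₂.ip x y := by
  rw [← U.map_ip, U.right_inv, U.right_inv]

def invCLM : W₂.X →L[ℂ] W₁.X :=
  LinearMap.mkContinuous ⟨⟨U.invFun, U.invFun_add⟩, U.invFun_smul⟩ 1 fun x => by
    simp [W₁.norm_eq_norm_of_ip_eq W₂ (U.invFun_ip x x)]

@[simp] lemma invCLM_apply (x : W₂.X) : U.invCLM x = U.invFun x := rfl

end Inverse

/-- Onto because an isometry out of a complete space has closed range. -/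
def ofDenseRange (F : W₁.X →L[ℂ] W₂.X) (hip : ∀ ζ η, W₂.ip (F ζ) (F η) = W₁.ip ζ η)
    (hla : ∀ a ζ, F (W₁.la a ζ) = W₂.la a (F ζ)) (hF : DenseRange F) : CorrIso W₁ W₂ :=
  have hiso : Isometry F := AddMonoidHomClass.isometry_of_norm F fun ζ =>
    W₂.norm_eq_norm_of_ip_eq W₁ (hip ζ ζ)
  have hsurj : Function.Surjective F := Set.range_eq_univ.mp <| by
    rw [← (hiso.antilipschitz.isClosed_range hiso.uniformContinuous).closure_eq]
    exact hF.closure_range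
  { toFun := F
    invFun := Function.surjInv hsurj
    left_inv := Function.leftInverse_surjInv ⟨hiso.injective, hsurj⟩
    right_inv := Function.rightInverse_surjInv hsurj
    map_add := F.map_add
    map_smul := F.map_smul
    map_la := hla
    map_ip := hip }

end CorrIso

lemma ImpData.ip_la_lip {A B : Type u} [NonUnitalCStarAlgebra A] [NonUnitalCStarAlgebra B]
    {M : Corr A B} (imp : ImpData M) (u v w z : M.X) :
    M.ip u (M.la (imp.lip v w) z) = M.ip u v * M.ip w z := by
  rw [imp.compat, M.ip_sm]

namespace DualData

variable {A B C : Type u} [NonUnitalCStarAlgebra A] [NonUnitalCStarAlgebra B]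
  [NonUnitalCStarAlgebra C] {M : Corr A B} {imp : ImpData M} {N : Corr B A}

lemma d_sm (dual : DualData M imp N) (x : M.X) (b : B) :
    dual.d (M.sm x b) = N.la (star b) (dual.d x) := by
  rw [dual.la_eq, star_star]

lemma star_lip_mul_mul_lip (dual : DualData M imp N) (μ₁ μ₂ n₁ n₂ : M.X) (c : A) :
    star (imp.lip μ₁ n₁) * c * imp.lip μ₂ n₂
      = N.ip (dual.d n₁) (N.la (M.ip μ₁ (M.la c μ₂)) (dual.d n₂)) :=
  calc star (imp.lip μ₁ n₁) * c * imp.lip μ₂ n₂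
      = N.ip (dual.d n₁) (dual.d μ₁) * c * N.ip (dual.d μ₂) (dual.d n₂) := by
        rw [imp.lip_star, dual.ip_eq, dual.ip_eq]
    _ = N.ip (dual.d n₁) (N.sm (N.sm (dual.d μ₁) c) (N.ip (dual.d μ₂) (dual.d n₂))) := by
        rw [N.ip_sm, N.ip_sm]
    _ = N.ip (dual.d n₁) (N.la (M.ip μ₁ (M.la c μ₂)) (dual.d n₂)) := by
        rw [dual.sm_eq, dual.ip_eq, dual.sm_eq, imp.lip_star, imp.compat, dual.d_sm,
          ← M.ip_star, M.la_adj, star_star, star_star]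

lemma ip_sm_lip_sm_lip (dual : DualData M imp N) {E : Corr C A} (x₁ x₂ : E.X)
    (μ₁ μ₂ n₁ n₂ : M.X) :
    E.ip (E.sm x₁ (imp.lip μ₁ n₁)) (E.sm x₂ (imp.lip μ₂ n₂))
      = N.ip (dual.d n₁) (N.la (M.ip μ₁ (M.la (E.ip x₁ x₂) μ₂)) (dual.d n₂)) := by
  rw [E.ip_sm_left, E.ip_sm, ← mul_assoc, dual.star_lip_mul_mul_lip]

variable {E : Corr C A} {T : Corr C B} (td : TensorData E M T)

lemma exists_rightContraction (dual : DualData M imp N) (n : M.X) :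
    ∃ P : T.X →L[ℂ] E.X, ∀ x μ, P (td.mk2 x μ) = E.sm x (imp.lip μ n) := by
  obtain ⟨P, hP, -⟩ := T.exists_extension_of_ip_eq E (fun p : E.X × M.X => td.mk2 p.1 p.2)
    (fun p => E.sm p.1 (imp.lip p.2 n)) td.dense (ContinuousLinearMap.id ℂ T.X)
    ((N.ipCLM (dual.d n)).comp (N.laL.flip (dual.d n)))
    fun p q => by simpa [td.ip_mk] using dual.ip_sm_lip_sm_lip p.1 q.1 p.2 q.2 n n
  exact ⟨P, fun x μ => hP (x, μ)⟩

/-- `x ⊗ μ ↦ x · ⟨μ, n⟩_A`, the composite `X ⊗_A M → X ⊗_A M ⊗_B N → X ⊗_A A → X` of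
`ζ ↦ ζ ⊗ ñ`, `1 ⊗ m_A` and the right action. -/
def rightContraction (dual : DualData M imp N) (n : M.X) : T.X →L[ℂ] E.X :=
  (dual.exists_rightContraction td n).choose

lemma rightContraction_mk2 (dual : DualData M imp N) (n : M.X) (x : E.X) (μ : M.X) :
    dual.rightContraction td n (td.mk2 x μ) = E.sm x (imp.lip μ n) :=
  (dual.exists_rightContraction td n).choose_spec x μ

lemma ip_rightContraction_la (dual : DualData M imp N) (n₁ n₂ : M.X) (a : C) (ζ η : T.X) :
    E.ip (dual.rightContraction td n₁ ζ) (E.la a (dual.rightContraction td n₂ η))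
      = N.ip (dual.d n₁) (N.la (T.ip ζ (T.la a η)) (dual.d n₂)) := by
  refine T.ip_map_map_eq_of_clspan E (dual.rightContraction td n₁)
    ((E.laL a).comp (dual.rightContraction td n₂)) (T.laL a)
    ((N.ipCLM (dual.d n₁)).comp (N.laL.flip (dual.d n₂))) td.dense ?_ ζ η
  rintro _ ⟨⟨x₁, μ₁⟩, rfl⟩ _ ⟨⟨x₂, μ₂⟩, rfl⟩
  simp only [ContinuousLinearMap.comp_apply, Corr.laL_apply, ContinuousLinearMap.flip_apply,
    Corr.ipCLM_apply, dual.rightContraction_mk2, td.la_mk, td.ip_mk, E.la_sm]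
  exact dual.ip_sm_lip_sm_lip x₁ (E.la a x₂) μ₁ μ₂ n₁ n₂

end DualData

section DualIntertwiner

variable {A B : Type u} [NonUnitalCStarAlgebra A] [NonUnitalCStarAlgebra B]
  {E : Corr A A} {F : Corr B B} {M : Corr A B} {imp : ImpData M} {N : Corr B A}
  {TXM : Corr A B} (tdXM : TensorData E M TXM) {TMY : Corr A B} (tdMY : TensorData M F TMY)
  (UM : CorrIso TXM TMY) {TYN : Corr B A} (tdYN : TensorData F N TYN)
  {TNX : Corr B A} (tdNX : TensorData N E TNX)

lemma DualData.ip_mk2_rightContraction (dual : DualData M imp N) (m₁ μ₁ : M.X) (y₁ : F.X)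
    (n₁ m₂ μ₂ : M.X) (y₂ : F.X) (n₂ : M.X) :
    TNX.ip (tdNX.mk2 (dual.d m₁) (dual.rightContraction tdXM n₁ (UM.invFun (tdMY.mk2 μ₁ y₁))))
        (tdNX.mk2 (dual.d m₂) (dual.rightContraction tdXM n₂ (UM.invFun (tdMY.mk2 μ₂ y₂))))
      = TYN.ip (tdYN.mk2 (F.la (M.ip m₁ μ₁) y₁) (dual.d n₁))
          (tdYN.mk2 (F.la (M.ip m₂ μ₂) y₂) (dual.d n₂)) := by
  rw [tdNX.ip_mk, dual.ip_eq, dual.ip_rightContraction_la, ← UM.invFun_la, UM.invFun_ip,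
    tdMY.la_mk, tdMY.ip_mk, imp.ip_la_lip, tdYN.ip_mk, F.ip_la_la, M.ip_star]

lemma DualData.clspan_la_ip_mk2_eq_univ (dual : DualData M imp N) :
    clspan (Set.range fun i : M.X × M.X × F.X × M.X =>
      tdYN.mk2 (F.la (M.ip i.1 i.2.1) i.2.2.1) (dual.d i.2.2.2)) = Set.univ := by
  have hla : clspan {y | ∃ m μ y', y = F.la (M.ip m μ) y'} = Set.univ := by
    refine clspan_eq_univ_of_bilinear F.laL imp.full_right clspan_univ
      (by simpa using F.clspan_range_la) ?_
    rintro _ ⟨m, μ, rfl⟩ y' -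
    exact ⟨m, μ, y', rfl⟩
  refine clspan_eq_univ_of_bilinear tdYN.mk2L hla clspan_univ (by simpa using tdYN.dense) ?_
  rintro _ ⟨m, μ, y, rfl⟩ n' -
  obtain ⟨n, rfl⟩ := dual.bij.2 n'
  exact ⟨(m, μ, y, n), rfl⟩

lemma DualData.clspan_mk2_rightContraction_eq_univ (dual : DualData M imp N) :
    clspan (Set.range fun i : M.X × M.X × F.X × M.X => tdNX.mk2 (dual.d i.1)
      (dual.rightContraction tdXM i.2.2.2 (UM.invFun (tdMY.mk2 i.2.1 i.2.2.1)))) = Set.univ := by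
  have hsm : clspan {ζ | ∃ m x μ n, ζ = tdNX.mk2 (dual.d m) (E.sm x (imp.lip μ n))} = Set.univ := by
    refine clspan_eq_univ_of_bilinear TNX.smL tdNX.dense imp.full_left
      (by simpa using TNX.clspan_range_sm) ?_
    rintro _ ⟨⟨n', x⟩, rfl⟩ _ ⟨μ, n, rfl⟩
    obtain ⟨m, rfl⟩ := dual.bij.2 n'
    exact ⟨m, x, μ, n, tdNX.sm_mk _ _ _⟩
  refine clspan_eq_univ_of_subset hsm ?_
  rintro _ ⟨m, x, μ, n, rfl⟩
  convert map_mem_clspan (f := (tdNX.mk2L (dual.d m)).comp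
    ((dual.rightContraction tdXM n).comp UM.invCLM)) ?_
    (tdMY.dense ▸ Set.mem_univ (UM.toFun (tdXM.mk2 x μ))) using 1
  · simp [UM.left_inv _, dual.rightContraction_mk2]
  · rintro _ ⟨⟨μ', y⟩, rfl⟩
    exact subset_clspan _ ⟨(m, μ', y, n), rfl⟩

theorem DualData.exists_corrIso_mk2 (dual : DualData M imp N) :
    ∃ UN : CorrIso TYN TNX, ∀ m μ n (y : F.X),
      UN.toFun (tdYN.mk2 (F.la (M.ip m μ) y) (dual.d n))
        = tdNX.mk2 (dual.d m) (dual.rightContraction tdXM n (UM.invFun (tdMY.mk2 μ y))) := by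
  let ι : M.X × M.X × F.X × M.X → TYN.X := fun i =>
    tdYN.mk2 (F.la (M.ip i.1 i.2.1) i.2.2.1) (dual.d i.2.2.2)
  let g : M.X × M.X × F.X × M.X → TNX.X := fun i =>
    tdNX.mk2 (dual.d i.1) (dual.rightContraction tdXM i.2.2.2 (UM.invFun (tdMY.mk2 i.2.1 i.2.2.1)))
  have hι : clspan (Set.range ι) = Set.univ := dual.clspan_la_ip_mk2_eq_univ tdYN
  obtain ⟨U, hUι, hUip⟩ := TYN.exists_extension_of_ip_eq TNX ι g hι
    (ContinuousLinearMap.id ℂ _) (ContinuousLinearMap.id ℂ _) <| by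
      rintro ⟨m₁, μ₁, y₁, n₁⟩ ⟨m₂, μ₂, y₂, n₂⟩
      simpa [ι, g] using dual.ip_mk2_rightContraction tdXM tdMY UM tdYN tdNX
        m₁ μ₁ y₁ n₁ m₂ μ₂ y₂ n₂
  have hla : ∀ b ζ, U (TYN.la b ζ) = TNX.la b (U ζ) := by
    intro b
    have hU := ContinuousLinearMap.ext_on ((clspan_eq_univ_iff_dense _).mp hι)
      (f := U.comp (TYN.laL b)) (g := (TNX.laL b).comp U) ?_
    · exact fun ζ => by simpa using DFunLike.congr_fun hU ζ
    rintro _ ⟨⟨m, μ, y, n⟩, rfl⟩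
    have hbι : TYN.la b (ι (m, μ, y, n)) = ι (M.sm m (star b), μ, y, n) := by
      simp only [ι, tdYN.la_mk, ← F.la_mul, M.ip_sm_left, star_star]
    simp only [ContinuousLinearMap.comp_apply, Corr.laL_apply, hbι, hUι]
    simp only [g, dual.d_sm, star_star, tdNX.la_mk]
  have hdense : DenseRange U := U.denseRange_of_clspan
    (dual.clspan_mk2_rightContraction_eq_univ tdXM tdMY UM tdNX)
    (by rintro _ ⟨i, rfl⟩; exact ⟨ι i, hUι i⟩)
  exact ⟨CorrIso.ofDenseRange U (by simpa using hUip) hla hdense, fun m μ n y => hUι (m, μ, y, n)⟩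

end DualIntertwiner

theorem dual_inverse_exists_general
    (A B : Type u) [NonUnitalCStarAlgebra A] [NonUnitalCStarAlgebra B]
    (E : Corr A A) (F : Corr B B)
    (M : Corr A B) (imp : ImpData M)
    (N : Corr B A) (dual : DualData M imp N)
    -- the tensor products X ⊗_A M and M ⊗_B Y, and the isomorphism U_M
    (TXM : Corr A B) (tdXM : TensorData E M TXM)
    (TMY : Corr A B) (tdMY : TensorData M F TMY)
    (UM : CorrIso TXM TMY)
    -- the tensor products M ⊗_B N and N ⊗_A M
    (TMN : Corr A A) (tdMN : TensorData M N TMN)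
    (TNM : Corr B B) (tdNM : TensorData N M TNM)
    -- the canonical isomorphism m_A : M ⊗_B N → A, x ⊗ ỹ ↦ ⟨x, y⟩_A
    (mA : TMN.X → A)
    (mA_mk : ∀ x y : M.X, mA (tdMN.mk2 x (dual.d y)) = imp.lip x y)
    -- the canonical isomorphism m_B : N ⊗_A M → B, x̃ ⊗ y ↦ ⟨x, y⟩_B
    (mB : TNM.X → B)
    (mB_mk : ∀ x y : M.X, mB (tdNM.mk2 (dual.d x) y) = M.ip x y)
    -- the tensor products Y ⊗_B N and N ⊗_A X
    (TYN : Corr B A) (tdYN : TensorData F N TYN)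
    (TNX : Corr B A) (tdNX : TensorData N E TNX) :
    ∃ _UN : CorrIso TYN TNX,
      ∀ (ξ : M.X) (n : N.X) (μ : M.X) (y : F.X),
        TXM.la (mA (tdMN.mk2 ξ n)) (UM.invFun (tdMY.mk2 μ y))
          = UM.invFun (tdMY.mk2 (M.sm ξ (mB (tdNM.mk2 n μ))) y) := by
  obtain ⟨UN, -⟩ := dual.exists_corrIso_mk2 tdXM tdMY UM tdYN tdNX
  refine ⟨UN, fun ξ n μ y => ?_⟩
  obtain ⟨w, rfl⟩ := dual.bij.2 n
  rw [mA_mk, mB_mk, ← imp.compat, ← tdMY.la_mk, UM.invFun_la]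

/-- Given correspondences `X` over `A` and `Y` over `B`, an `A–B`
imprimitivity bimodule `M` with an isomorphism `U_M : X ⊗_A M → M ⊗_B Y`, its dual
`N = M̃`, and the canonical isomorphisms `m_A : M ⊗_B N → A`, `m_B : N ⊗_A M → B`,
there is a `B–A` correspondence isomorphism `U_N : Y ⊗_B N → N ⊗_A X` such that
`(i_{l,X} ⊗ 1_M)(m_A ⊗ 1_{X⊗M})(1_{M⊗N} ⊗ U_M⁻¹) = U_M⁻¹(1_M ⊗ i_{l,Y})(1_M ⊗ m_B ⊗ 1_Y)`
as maps on `M ⊗_B N ⊗_A M ⊗_B Y` (expressed on elementary tensors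
`ξ ⊗ n ⊗ μ ⊗ y`, on which both sides are given by the displayed formulas). -/
theorem dual_inverse_exists
    (A B : Type u) [NonUnitalCStarAlgebra A] [NonUnitalCStarAlgebra B]
    (E : Corr A A) (F : Corr B B)
    (M : Corr A B) (imp : ImpData M)
    (N : Corr B A) (dual : DualData M imp N)
    -- the tensor products X ⊗_A M and M ⊗_B Y, and the isomorphism U_M
    (TXM : Corr A B) (tdXM : TensorData E M TXM)
    (TMY : Corr A B) (tdMY : TensorData M F TMY)
    (UM : CorrIso TXM TMY)
    -- the tensor products M ⊗_B N and N ⊗_A M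
    (TMN : Corr A A) (tdMN : TensorData M N TMN)
    (TNM : Corr B B) (tdNM : TensorData N M TNM)
    -- the canonical isomorphism m_A : M ⊗_B N → A, x ⊗ ỹ ↦ ⟨x, y⟩_A
    (mA : TMN.X → A)
    (mA_add : ∀ ζ η, mA (ζ + η) = mA ζ + mA η)
    (mA_smul : ∀ (c : ℂ) ζ, mA (c • ζ) = c • mA ζ)
    (mA_cont : Continuous mA)
    (mA_bij : Function.Bijective mA)
    (mA_mk : ∀ x y : M.X, mA (tdMN.mk2 x (dual.d y)) = imp.lip x y)
    -- the canonical isomorphism m_B : N ⊗_A M → B, x̃ ⊗ y ↦ ⟨x, y⟩_B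
    (mB : TNM.X → B)
    (mB_add : ∀ ζ η, mB (ζ + η) = mB ζ + mB η)
    (mB_smul : ∀ (c : ℂ) ζ, mB (c • ζ) = c • mB ζ)
    (mB_cont : Continuous mB)
    (mB_bij : Function.Bijective mB)
    (mB_mk : ∀ x y : M.X, mB (tdNM.mk2 (dual.d x) y) = M.ip x y)
    -- the tensor products Y ⊗_B N and N ⊗_A X
    (TYN : Corr B A) (tdYN : TensorData F N TYN)
    (TNX : Corr B A) (tdNX : TensorData N E TNX) :
    ∃ _UN : CorrIso TYN TNX,
      ∀ (ξ : M.X) (n : N.X) (μ : M.X) (y : F.X),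
        TXM.la (mA (tdMN.mk2 ξ n)) (UM.invFun (tdMY.mk2 μ y))
          = UM.invFun (tdMY.mk2 (M.sm ξ (mB (tdNM.mk2 n μ))) y) :=
  dual_inverse_exists_general A B E F M imp N dual TXM tdXM TMY tdMY UM TMN tdMN TNM tdNM mA mA_mk
    mB mB_mk TYN tdYN TNX tdNX

end
end

section
/- Let X be a C*-correspondence over A with universal covariant representation (Υ, t), let (π, Φ) be the C-covariant representation of X associated to the identity morphism [A, U_A] : X → X in ECCor, and let σ : O_X → K(A ⊗_A O_X) be the induced homomorphism (σ(t(x)) = Φ(x), σ(Υ(a)) = π(a)). Then the A–O_X correspondence isomorphism U : A ⊗_A O_X → O_X determined by a ⊗ S ↦ Υ(a)S satisfies U(σ(T)ξ) = T·U(ξ) for every T ∈ O_X and ξ ∈ A ⊗_A O_X; that is, A ⊗_A O_X and O_X are isomorphic as O_X–O_X correspondences. -/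
noncomputable section

universe u

/-! The elements `T ∈ O_X` with `U ∘ σ(T) = T · U` form a closed *-subalgebra; it is closed
under adjoints because `U` is onto and turns the inner product of `A ⊗_A O_X` into
`(S, T) ↦ S* T`.
Since `O_X` is generated by `Υ(A)` and `t(X)`, and elementary tensors `a ⊗ S` span a dense
subspace, it remains to check `U(σ(Υ(a))(b ⊗ S)) = Υ(ab) S` and
`U(σ(t(x))(a ⊗ S)) = t(x · a) S = t(x) Υ(a) S`, the latter because `U_A(x ⊗ a) = x · a`. -/

section Generalities

variable {A B C : Type u} [NonUnitalCStarAlgebra A] [NonUnitalCStarAlgebra B]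
  [NonUnitalCStarAlgebra C]

theorem TensorData.continuousLinearMap_ext {E : Corr A B} {F : Corr B C} {T : Corr A C}
    (td : TensorData E F T)
    {V : Type*} [TopologicalSpace V] [AddCommMonoid V] [Module ℂ V] [T2Space V]
    {f g : T.X →L[ℂ] V} (h : ∀ x y, f (td.mk2 x y) = g (td.mk2 x y)) : f = g := by
  refine ContinuousLinearMap.ext_on (dense_iff_closure_eq.2 td.dense) ?_
  rintro _ ⟨⟨x, y⟩, rfl⟩
  exact h x y

theorem Corr.ip_sm_left_s6 (E : Corr A B) (x y : E.X) (b : B) :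
    E.ip (E.sm x b) y = star b * E.ip x y := by
  rw [← E.ip_star y, E.ip_sm, star_mul, E.ip_star]

variable {E : Corr A A} {D : Type u} [NonUnitalCStarAlgebra D]

def CorrRep.πHom (R : CorrRep E D) : A →⋆ₙₐ[ℂ] D where
  toFun := R.π
  map_smul' := R.π_smul
  map_zero' := by simpa using R.π_smul 0 0
  map_add' := R.π_add
  map_mul' := R.π_mul
  map_star' := R.π_star

theorem CorrRep.norm_t_le (R : CorrRep E D) (x : E.X) : ‖R.t x‖ ≤ ‖x‖ := by
  have hsq : ‖R.t x‖ * ‖R.t x‖ ≤ ‖x‖ * ‖x‖ :=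
    calc ‖R.t x‖ * ‖R.t x‖ = ‖R.πHom (E.ip x x)‖ := by
          rw [← CStarRing.norm_star_mul_self, R.t_mul]; rfl
      _ ≤ ‖E.ip x x‖ := NonUnitalStarAlgHom.norm_apply_le _ _
      _ = ‖x‖ * ‖x‖ := by rw [← E.ip_norm, sq]
  exact (mul_self_le_mul_self_iff (norm_nonneg _) (norm_nonneg _)).2 hsq

def CorrRep.tCLM (R : CorrRep E D) : E.X →L[ℂ] D :=
  LinearMap.mkContinuous { toFun := R.t, map_add' := R.t_add, map_smul' := R.t_smul } 1
    fun x => (one_mul ‖x‖).symm ▸ R.norm_t_le x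

/-- All four products `u* u, u* v, v* u, v* v` of `u = t(x·a)`, `v = t(x)π(a)` equal
`π(a* ⟨x, x⟩ a)`, so `(u - v)* (u - v) = 0`. -/
theorem CorrRep.t_sm (R : CorrRep E D) (x : E.X) (a : A) :
    R.t (E.sm x a) = R.t x * R.π a := by
  set u := R.t (E.sm x a)
  set v := R.t x * R.π a
  have hstv : star v = R.π (star a) * star (R.t x) := by rw [star_mul, ← R.π_star]
  have huu : star u * u = R.π (star a * (E.ip x x * a)) := by
    rw [R.t_mul, E.ip_sm_left_s6, E.ip_sm]
  have huv : star u * v = R.π (star a * (E.ip x x * a)) := by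
    rw [← mul_assoc, R.t_mul, E.ip_sm_left_s6, ← R.π_mul, mul_assoc]
  have hvu : star v * u = R.π (star a * (E.ip x x * a)) := by
    rw [hstv, mul_assoc, R.t_mul, E.ip_sm, ← R.π_mul]
  have hvv : star v * v = R.π (star a * (E.ip x x * a)) := by
    rw [hstv, mul_assoc, ← mul_assoc (star (R.t x)), R.t_mul, ← R.π_mul, ← R.π_mul]
  have hd : star (u - v) * (u - v) = 0 := by
    rw [star_sub, sub_mul, mul_sub, mul_sub, huu, huv, hvu, hvv, sub_self]
  exact sub_eq_zero.mp (CStarRing.star_mul_self_eq_zero_iff _ |>.mp hd)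

def CCovSetup.ΛCLM {F : Corr B B} {m : EMor E F} {CPY : CuntzPimsner F} 
    (st : CCovSetup m CPY) (S : CPY.O) : m.TMY.X →L[ℂ] st.W.X where
  toFun ζ := st.Λ ζ S
  map_add' := st.Λ_add S
  map_smul' := st.Λ_smul S
  cont := st.Λ_cont S

end Generalities

section Intertwiners

variable {A : Type u} [NonUnitalCStarAlgebra A] {E : Corr A A} {m : EMor E E}
  {CP : CuntzPimsner E} {st : CCovSetup m CP}

theorem SigmaData.σ_zero (sd : SigmaData st CP) : sd.σ 0 = 0 := by
  simpa using sd.σ_smul 0 0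

def SigmaData.intertwiners (sd : SigmaData st CP) (U : st.W.X →L[ℂ] CP.O)
    (hU : Function.Surjective U) (hU_ip : ∀ ζ η, star (U ζ) * U η = st.W.ip ζ η) :
    NonUnitalStarSubalgebra ℂ CP.O where
  carrier := {T | ∀ ζ, U (sd.σ T ζ) = T * U ζ}
  zero_mem' ζ := by simp [sd.σ_zero]
  add_mem' {S T} hS hT ζ := by
    simp only [sd.σ_add, add_apply, map_add, hS ζ, hT ζ, add_mul]
  mul_mem' {S T} hS hT ζ := by
    simp only [sd.σ_mul, ContinuousLinearMap.comp_apply, hS _, hT ζ, mul_assoc]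
  smul_mem' c T hT ζ := by
    simp only [sd.σ_smul, smul_apply, map_smul, hT ζ, smul_mul_assoc]
  star_mem' {T} hT ζ := by
    -- `U` preserves inner products and is onto, so it suffices to test against every `U η`.
    set d := U (sd.σ (star T) ζ) - star T * U ζ
    have htest : ∀ η, star (U η) * d = 0 := fun η => by
      rw [mul_sub, sub_eq_zero, hU_ip, ← sd.σ_star, ← hU_ip, hT η, star_mul, mul_assoc]
    obtain ⟨η, hη⟩ := hU d
    have hdd := htest η
    rw [hη] at hdd
    exact sub_eq_zero.mp <| (CStarRing.star_mul_self_eq_zero_iff d).mp hdd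

theorem SigmaData.isClosed_intertwiners (sd : SigmaData st CP) (U : st.W.X →L[ℂ] CP.O)
    (hU : Function.Surjective U) (hU_ip : ∀ ζ η, star (U ζ) * U η = st.W.ip ζ η) :
    IsClosed (sd.intertwiners U hU hU_ip : Set CP.O) := by
  change IsClosed {T : CP.O | ∀ ζ, U (sd.σ T ζ) = T * U ζ}
  rw [Set.ofPred_forall]
  exact isClosed_iInter fun ζ => isClosed_eq
    (U.continuous.comp ((ContinuousLinearMap.apply ℂ st.W.X ζ).continuous.comp sd.σ_cont))
    (continuous_mul_const _)

theorem SigmaData.intertwiners_eq_top (sd : SigmaData st CP) (U : st.W.X →L[ℂ] CP.O)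
    (hU : Function.Surjective U) (hU_ip : ∀ ζ η, star (U ζ) * U η = st.W.ip ζ η)
    (hπ : ∀ a, CP.rep.π a ∈ sd.intertwiners U hU hU_ip)
    (ht : ∀ x, CP.rep.t x ∈ sd.intertwiners U hU hU_ip) :
    sd.intertwiners U hU hU_ip = ⊤ := by
  have hgen : NonUnitalStarAlgebra.adjoin ℂ (Set.range CP.rep.π ∪ Set.range CP.rep.t)
      ≤ sd.intertwiners U hU hU_ip :=
    NonUnitalStarAlgebra.adjoin_le <| Set.union_subset (Set.range_subset_iff.2 hπ)
      (Set.range_subset_iff.2 ht)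
  refine eq_top_iff.2 fun T _ => ?_
  exact closure_minimal hgen (sd.isClosed_intertwiners U hU hU_ip) (CP.generates T)

end Intertwiners

section IdentityMorphism

variable {A : Type u} [NonUnitalCStarAlgebra A] {E : Corr A A} {CP : CuntzPimsner E}
  {e : EMor E E} (idd : PullCorr (fun a : A => a) e.M) (st : CCovSetup e CP)
  (U : st.W.X →L[ℂ] CP.O)

theorem CCovSetup.apply_lmul_eq_π_mul
    (U_mk : ∀ a S, U (st.tdW.mk2 (idd.u a) (st.pcY.u S)) = CP.rep.π a * S) (a : A) :
    ∀ ζ, U (st.W.lmul a ζ) = CP.rep.π a * U ζ := by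
  have h : U ∘L st.W.lmul a = ContinuousLinearMap.mul ℂ CP.O (CP.rep.π a) ∘L U :=
    st.tdW.continuousLinearMap_ext fun m w => by
      obtain ⟨b, rfl⟩ := idd.bij.2 m
      obtain ⟨S, rfl⟩ := st.pcY.bij.2 w
      change U (st.W.la a _) = CP.rep.π a * U _
      rw [st.tdW.la_mk, idd.la, U_mk, U_mk, CP.rep.π_mul, mul_assoc]
  exact DFunLike.congr_fun h

theorem CCovSetup.apply_Λ_eq_t_mul
    (U_mk : ∀ a S, U (st.tdW.mk2 (idd.u a) (st.pcY.u S)) = CP.rep.π a * S)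
    (il : e.TMY.X →L[ℂ] E.X) (il_mk : ∀ a x, il (e.tdMY.mk2 (idd.u a) x) = E.la a x)
    (S : CP.O) : ∀ ζ, U (st.Λ ζ S) = CP.rep.t (il ζ) * S := by
  have h : U ∘L st.ΛCLM S = (ContinuousLinearMap.mul ℂ CP.O).flip S ∘L CP.rep.tCLM ∘L il :=
    e.tdMY.continuousLinearMap_ext fun m y => by
      obtain ⟨b, rfl⟩ := idd.bij.2 m
      change U (st.Λ _ S) = CP.rep.t (il _) * S
      rw [st.Λ_mk, U_mk, il_mk, ← CP.rep.mul_t, mul_assoc]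
  exact DFunLike.congr_fun h

theorem CCovSetup.apply_Φ_eq_t_mul
    (U_mk : ∀ a S, U (st.tdW.mk2 (idd.u a) (st.pcY.u S)) = CP.rep.π a * S)
    (il : e.TMY.X →L[ℂ] E.X) (il_mk : ∀ a x, il (e.tdMY.mk2 (idd.u a) x) = E.la a x)
    (hUA : ∀ x a, il (e.U.toFun (e.tdXM.mk2 x (idd.u a))) = E.sm x a) (x : E.X) :
    ∀ ζ, U (st.Φ x ζ) = CP.rep.t x * U ζ := by
  have h : U ∘L st.Φ x = ContinuousLinearMap.mul ℂ CP.O (CP.rep.t x) ∘L U :=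
    st.tdW.continuousLinearMap_ext fun m w => by
      obtain ⟨a, rfl⟩ := idd.bij.2 m
      obtain ⟨S, rfl⟩ := st.pcY.bij.2 w
      change U (st.Φ x _) = CP.rep.t x * U _
      rw [st.Φ_mk, st.apply_Λ_eq_t_mul idd U U_mk il il_mk, hUA, CP.rep.t_sm, U_mk, mul_assoc]
  exact DFunLike.congr_fun h

end IdentityMorphism

theorem identity_morphism_gives_identity_correspondence_general
    (A : Type u) [NonUnitalCStarAlgebra A] (E : Corr A A)
    (CP : CuntzPimsner E)
    (e : EMor E E)
    -- e is the identity morphism [A, U_A]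
    (idd : PullCorr (fun a : A => a) e.M)
    (il : e.TMY.X → E.X)
    (il_add : ∀ ζ η, il (ζ + η) = il ζ + il η)
    (il_smul : ∀ (c : ℂ) ζ, il (c • ζ) = c • il ζ)
    (il_cont : Continuous il)
    (il_mk : ∀ (a : A) (x : E.X), il (e.tdMY.mk2 (idd.u a) x) = E.la a x)
    (hUA : ∀ (x : E.X) (a : A), il (e.U.toFun (e.tdXM.mk2 x (idd.u a))) = E.sm x a)
    -- the C-covariant representation of X on K(A ⊗_A O_X) and the induced σ
    (st : CCovSetup e CP) (sd : SigmaData st CP)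
    -- the canonical isomorphism U : A ⊗_A O_X → O_X, a ⊗ S ↦ Υ(a)S
    (U : st.W.X → CP.O)
    (U_bij : Function.Bijective U)
    (U_add : ∀ ζ η, U (ζ + η) = U ζ + U η)
    (U_smul : ∀ (c : ℂ) ζ, U (c • ζ) = c • U ζ)
    (U_cont : Continuous U)
    (U_ip : ∀ ζ η, star (U ζ) * U η = st.W.ip ζ η)
    (U_mk : ∀ (a : A) (S : CP.O), U (st.tdW.mk2 (idd.u a) (st.pcY.u S)) = CP.rep.π a * S) :
    ∀ (T : CP.O) (ζ : st.W.X), U (sd.σ T ζ) = T * U ζ := by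
  let Uc : st.W.X →L[ℂ] CP.O :=
    { toFun := U, map_add' := U_add, map_smul' := U_smul, cont := U_cont }
  let ilc : e.TMY.X →L[ℂ] E.X :=
    { toFun := il, map_add' := il_add, map_smul' := il_smul, cont := il_cont }
  have hπ : ∀ a, CP.rep.π a ∈ sd.intertwiners Uc U_bij.2 U_ip := fun a ζ => by
    rw [sd.σ_π]
    exact st.apply_lmul_eq_π_mul idd Uc U_mk a ζ
  have ht : ∀ x, CP.rep.t x ∈ sd.intertwiners Uc U_bij.2 U_ip := fun x ζ => by
    rw [sd.σ_t]
    exact st.apply_Φ_eq_t_mul idd Uc U_mk ilc il_mk hUA x ζ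
  exact fun T => (sd.intertwiners_eq_top Uc U_bij.2 U_ip hπ ht).ge trivial

/-- Let `(π, Φ)` be the C-covariant representation of `X` associated with
the identity morphism `[A, U_A] : X → X` in `ECCor`, and let `σ : O_X → K(A ⊗_A O_X)` be
the induced homomorphism.  Then the `A–O_X` correspondence isomorphism
`U : A ⊗_A O_X → O_X`, `a ⊗ S ↦ Υ(a)S`, satisfies `U(σ(T)ξ) = T · U(ξ)` for all
`T ∈ O_X`, `ξ ∈ A ⊗_A O_X`; that is, `A ⊗_A O_X ≅ O_X` as `O_X–O_X` correspondences. -/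
theorem identity_morphism_gives_identity_correspondence
    (A : Type u) [NonUnitalCStarAlgebra A] (E : Corr A A)
    (CP : CuntzPimsner E)
    (e : EMor E E)
    -- e is the identity morphism [A, U_A]
    (idd : PullCorr (fun a : A => a) e.M)
    (il : e.TMY.X → E.X)
    (il_add : ∀ ζ η, il (ζ + η) = il ζ + il η)
    (il_smul : ∀ (c : ℂ) ζ, il (c • ζ) = c • il ζ)
    (il_cont : Continuous il)
    (il_inj : Function.Injective il)
    (il_mk : ∀ (a : A) (x : E.X), il (e.tdMY.mk2 (idd.u a) x) = E.la a x)
    (hUA : ∀ (x : E.X) (a : A), il (e.U.toFun (e.tdXM.mk2 x (idd.u a))) = E.sm x a)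
    -- the C-covariant representation of X on K(A ⊗_A O_X) and the induced σ
    (st : CCovSetup e CP) (sd : SigmaData st CP)
    -- the canonical isomorphism U : A ⊗_A O_X → O_X, a ⊗ S ↦ Υ(a)S
    (U : st.W.X → CP.O)
    (U_bij : Function.Bijective U)
    (U_add : ∀ ζ η, U (ζ + η) = U ζ + U η)
    (U_smul : ∀ (c : ℂ) ζ, U (c • ζ) = c • U ζ)
    (U_cont : Continuous U)
    (U_ip : ∀ ζ η, star (U ζ) * U η = st.W.ip ζ η)
    (U_sm : ∀ (ζ : st.W.X) (S : CP.O), U (st.W.sm ζ S) = U ζ * S)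
    (U_mk : ∀ (a : A) (S : CP.O), U (st.tdW.mk2 (idd.u a) (st.pcY.u S)) = CP.rep.π a * S) :
    ∀ (T : CP.O) (ζ : st.W.X), U (sd.σ T ζ) = T * U ζ :=
  identity_morphism_gives_identity_correspondence_general A E CP e idd il il_add il_smul il_cont
    il_mk hUA st sd U U_bij U_add U_smul U_cont U_ip U_mk

end
end
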